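/- arXiv:1706.00814 — 2 statements merged into one kernel-verified Lean document; each statement's English description precedes it below -/
import Mathlib

section
/- Fix real numbers a₁₂, a₂₂ and α > 0 with a₂₂ − a₁₂² ≥ α. For η, μ ∈ ℝ set b(η,μ) = (1/a₂₂)·√(a₂₂(1+μ²) + (a₂₂−a₁₂²)η²) and λ(η,μ) = i·(a₁₂/a₂₂)·η + b(η,μ). Then for each fixed μ the function η ↦ λ(η,μ) is differentiable on ℝ, and |∂λ/∂η (η,μ)| ≤ (|a₁₂| + √(a₂₂ − a₁₂²))/a₂₂ for all η, μ ∈ ℝ; in particular the derivative is bounded by a constant independent of η and μ. -/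
/-!
The imaginary part of `λ` is linear in `η` with slope `a₁₂/a₂₂`, and the real part is
`√(A + c η²)/a₂₂` with `A = a₂₂(1+μ²) ≥ 0` and `c = a₂₂ - a₁₂² > 0`. The derivative of the
latter is `c η / (a₂₂ √(A + c η²))`, and `c |η| = √c √(c η²) ≤ √c √(A + c η²)` bounds it by
`√c / a₂₂` uniformly in `A`, hence in `μ`.
-/

open Complex

theorem hasDerivAt_sqrt_add_mul_sq {A c x : ℝ} (h : A + c * x ^ 2 ≠ 0) :
    HasDerivAt (fun y => √(A + c * y ^ 2)) (c * x / √(A + c * x ^ 2)) x := by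
  have hpoly : HasDerivAt (fun y => A + c * y ^ 2) (2 * (c * x)) x := by
    simpa [mul_comm, mul_assoc] using ((hasDerivAt_pow 2 x).const_mul c).const_add A
  convert hpoly.sqrt h using 1
  rw [mul_div_mul_left _ _ (two_ne_zero' ℝ)]

theorem abs_mul_div_sqrt_add_mul_sq_le {A c : ℝ} (hA : 0 ≤ A) (hc : 0 ≤ c) (x : ℝ) :
    |c * x / √(A + c * x ^ 2)| ≤ √c := by
  rw [abs_div, abs_mul, abs_of_nonneg hc, abs_of_nonneg (Real.sqrt_nonneg _)]
  refine div_le_of_le_mul₀ (Real.sqrt_nonneg _) (Real.sqrt_nonneg _) ?_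
  calc c * |x| = √c * √(c * x ^ 2) := by
        rw [Real.sqrt_mul hc, Real.sqrt_sq_eq_abs, ← mul_assoc, Real.mul_self_sqrt hc]
    _ ≤ √c * √(A + c * x ^ 2) := by gcongr; linarith

theorem HasDerivAt.const_mul_ofReal_add_ofReal_comp (k : ℂ) {g : ℝ → ℝ} {g' x : ℝ}
    (hg : HasDerivAt g g' x) :
    HasDerivAt (fun y : ℝ => k * y + g y) (k + g') x := by
  have hofReal : HasDerivAt (fun y : ℝ => (y : ℂ)) 1 x := ofRealCLM.hasDerivAt
  simpa only [mul_one] using (hofReal.const_mul k).fun_add hg.ofReal_comp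

theorem norm_I_mul_ofReal_add_ofReal_le (r s : ℝ) : ‖I * r + s‖ ≤ |r| + |s| := by
  refine (norm_add_le _ _).trans_eq ?_
  rw [norm_mul, norm_I, one_mul, norm_real, norm_real, Real.norm_eq_abs, Real.norm_eq_abs]

/-- Uniform derivative bound for the root `λ(η,μ)` (the scalar estimate behind
the Mihlin-type multiplier conditions in Lemma 5.2): for each fixed `μ` the map
`η ↦ λ(η,μ)` is differentiable and its derivative is bounded by
`(|a₁₂| + √(a₂₂ − a₁₂²))/a₂₂`, independently of `η` and `μ`. -/
theorem stmt_6 (a₁₂ a₂₂ α : ℝ) (hα : 0 < α) (hell : a₂₂ - a₁₂ ^ 2 ≥ α)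
    (b : ℝ → ℝ → ℝ)
    (hb : ∀ η μ, b η μ = (1 / a₂₂) * Real.sqrt (a₂₂ * (1 + μ ^ 2) + (a₂₂ - a₁₂ ^ 2) * η ^ 2))
    (lam : ℝ → ℝ → ℂ)
    (hlam : ∀ η μ, lam η μ = Complex.I * ((a₁₂ : ℂ) / (a₂₂ : ℂ)) * (η : ℂ) + (b η μ : ℂ)) :
    ∀ μ : ℝ, Differentiable ℝ (fun η => lam η μ) ∧
      ∀ η : ℝ, ‖deriv (fun η' => lam η' μ) η‖ ≤
        (|a₁₂| + Real.sqrt (a₂₂ - a₁₂ ^ 2)) / a₂₂ := by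
  intro μ
  set c := a₂₂ - a₁₂ ^ 2
  set A := a₂₂ * (1 + μ ^ 2)
  have hc : 0 < c := hα.trans_le hell
  have ha₂₂ : 0 < a₂₂ := by nlinarith [sq_nonneg a₁₂]
  have hA : 0 < A := by positivity
  have hlam' : (fun η => lam η μ) = fun η : ℝ =>
      I * ((a₁₂ / a₂₂ : ℝ) : ℂ) * η + ((1 / a₂₂ * √(A + c * η ^ 2) : ℝ) : ℂ) := by
    funext η
    rw [hlam, hb]
    push_cast
    rfl
  have hderiv : ∀ η, HasDerivAt (fun η => lam η μ)
      (I * ((a₁₂ / a₂₂ : ℝ) : ℂ) + ((1 / a₂₂ * (c * η / √(A + c * η ^ 2)) : ℝ) : ℂ)) η := by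
    intro η
    rw [hlam']
    exact ((hasDerivAt_sqrt_add_mul_sq (by positivity)).const_mul _)
      |>.const_mul_ofReal_add_ofReal_comp _
  refine ⟨fun η => (hderiv η).differentiableAt, fun η => ?_⟩
  rw [(hderiv η).deriv]
  refine (norm_I_mul_ofReal_add_ofReal_le _ _).trans ?_
  rw [abs_div, abs_of_pos ha₂₂, abs_mul, abs_of_pos (one_div_pos.mpr ha₂₂), add_div]
  have := abs_mul_div_sqrt_add_mul_sq_le hA.le hc.le η
  gcongr
  calc 1 / a₂₂ * |c * η / √(A + c * η ^ 2)| ≤ 1 / a₂₂ * √c := by gcongr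
    _ = √c / a₂₂ := one_div_mul_eq_div _ _
end

section
/- Let a > 0, α > 0, and a₁₂, a₂₂ ∈ ℝ with a₂₂ − a₁₂² ≥ α. Fix η, μ ∈ ℝ and set κ = (−i·a₁₂·η + √(a₂₂(a+μ²) + (a₂₂−a₁₂²)η²))/a₂₂. Then: (i) Re κ > 0; (ii) for any ψ₀ ∈ ℂ, the function u(y) = e^(−κy)·ψ₀ is bounded on [0,∞), tends to 0 as y → ∞, satisfies u(0) = ψ₀, and solves the ODE −a₂₂·u''(y) + 2a₁₂·i·η·u'(y) + (a + η² + μ²)·u(y) = 0 for all y > 0; (iii) conversely, every bounded twice continuously differentiable function u : [0,∞) → ℂ solving this ODE on (0,∞) with u(0) = ψ₀ equals y ↦ e^(−κy)·ψ₀. -/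
/-!
The ODE factors as `-a₂₂ (D - κ̄)(D + κ) u = 0`, where `κ` and `κ̄ = conj κ` both have real part
`√(a₂₂(a + μ²) + (a₂₂ - a₁₂²)η²) / a₂₂ > 0`. Solving the two first-order factors in turn, every
solution on `(0, ∞)` is `A e^{-κy} + B e^{κ̄y}`; boundedness kills the growing mode `B e^{κ̄y}`, and
continuity at `0` identifies `A` with the boundary value.
-/

open Complex Filter Set Topology

lemma hasDerivAt_cexp_mul_ofReal (c : ℂ) (y : ℝ) :
    HasDerivAt (fun t : ℝ => exp (c * t)) (c * exp (c * y)) y := by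
  simpa [mul_comm] using (((hasDerivAt_id y).ofReal_comp).const_mul c).cexp

lemma norm_cexp_neg_mul_ofReal_le_one {κ : ℂ} (hκ : 0 ≤ κ.re) {y : ℝ} (hy : 0 ≤ y) :
    ‖exp (-κ * y)‖ ≤ 1 := by
  rw [norm_exp, Real.exp_le_one_iff]
  simpa using mul_nonneg hκ hy

lemma tendsto_cexp_neg_mul_ofReal_atTop {κ : ℂ} (hκ : 0 < κ.re) :
    Tendsto (fun y : ℝ => exp (-κ * y)) atTop (𝓝 0) := by
  rw [tendsto_exp_nhds_zero_iff]
  simpa using tendsto_id.const_mul_atTop hκ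

lemma eq_zero_of_norm_mul_cexp_le {l B : ℂ} (hl : 0 < l.re) {M : ℝ}
    (hB : ∀ y : ℝ, 0 < y → ‖B * exp (l * y)‖ ≤ M) : B = 0 := by
  have hbound : ∀ᶠ y : ℝ in atTop, ‖B‖ ≤ M * ‖exp (-l * y)‖ := by
    filter_upwards [eventually_gt_atTop 0] with y hy
    calc ‖B‖ = ‖B * exp (l * y)‖ * ‖exp (-l * y)‖ := by
          rw [← norm_mul, mul_assoc, ← exp_add, neg_mul, add_neg_cancel, exp_zero, mul_one]
      _ ≤ M * ‖exp (-l * y)‖ := by gcongr; exact hB y hy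
  have hlim : Tendsto (fun y : ℝ => M * ‖exp (-l * y)‖) atTop (𝓝 0) := by
    simpa using ((tendsto_cexp_neg_mul_ofReal_atTop hl).norm).const_mul M
  exact norm_le_zero_iff.1 (ge_of_tendsto hlim hbound)

lemma exists_eq_mul_cexp_of_hasDerivAt {s : Set ℝ} (hs : IsOpen s) (hs' : IsPreconnected s)
    {g : ℝ → ℂ} {c : ℂ}
    (hg : ∀ y ∈ s, HasDerivAt g (c * g y) y) :
    ∃ C : ℂ, ∀ y ∈ s, g y = C * exp (c * y) := by
  have hderiv : ∀ y ∈ s, HasDerivAt (fun t : ℝ => exp (-c * t) * g t) 0 y := fun y hy =>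
    ((hasDerivAt_cexp_mul_ofReal (-c) y).mul (hg y hy)).congr_deriv (by ring)
  obtain ⟨C, hC⟩ := hs.exists_is_const_of_deriv_eq_zero hs'
    (fun y hy => (hderiv y hy).differentiableAt.differentiableWithinAt)
    (fun y hy => (hderiv y hy).deriv)
  refine ⟨C, fun y hy => ?_⟩
  rw [← hC y hy, mul_comm, ← mul_assoc, ← exp_add, neg_mul, add_neg_cancel, exp_zero, one_mul]

lemma exists_eq_add_cexp_of_hasDerivAt {s : Set ℝ} (hs : IsOpen s) (hs' : IsPreconnected s)
    {v v' v'' : ℝ → ℂ} {κ l : ℂ} (hκl : l + κ ≠ 0)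
    (hv : ∀ y ∈ s, HasDerivAt v (v' y) y) (hv' : ∀ y ∈ s, HasDerivAt v' (v'' y) y)
    (hode : ∀ y ∈ s, v'' y = (l - κ) * v' y + l * κ * v y) :
    ∃ A B : ℂ, ∀ y ∈ s, v y = A * exp (-κ * y) + B * exp (l * y) := by
  -- `(D + κ) v` solves `(D - l) g = 0`, and subtracting the resulting particular solution
  -- leaves a solution of `(D + κ) w = 0`.
  obtain ⟨C, hC⟩ := exists_eq_mul_cexp_of_hasDerivAt hs hs' (g := fun y => v' y + κ * v y)
    (c := l) fun y hy =>
      ((hv' y hy).add ((hv y hy).const_mul κ)).congr_deriv (by rw [hode y hy]; ring)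
  set B := C / (l + κ)
  obtain ⟨A, hA⟩ := exists_eq_mul_cexp_of_hasDerivAt hs hs'
    (g := fun y => v y - B * exp (l * y)) (c := -κ) fun y hy => by
      have hCB : B * (l + κ) = C := div_mul_cancel₀ C hκl
      refine ((hv y hy).sub ((hasDerivAt_cexp_mul_ofReal l y).const_mul B)).congr_deriv ?_
      linear_combination hC y hy - exp (l * y) * hCB
  exact ⟨A, B, fun y hy => by rw [← hA y hy]; ring⟩

lemma eq_cexp_neg_mul_of_bounded {v v' v'' : ℝ → ℂ} {κ l : ℂ} (hκ : 0 ≤ κ.re) (hl : 0 < l.re)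
    (hcont : ContinuousOn v (Ici 0))
    (hv : ∀ y ∈ Ioi (0 : ℝ), HasDerivAt v (v' y) y)
    (hv' : ∀ y ∈ Ioi (0 : ℝ), HasDerivAt v' (v'' y) y)
    (hode : ∀ y ∈ Ioi (0 : ℝ), v'' y = (l - κ) * v' y + l * κ * v y)
    {M : ℝ} (hM : ∀ y : ℝ, 0 ≤ y → ‖v y‖ ≤ M) :
    ∀ y : ℝ, 0 ≤ y → v y = exp (-κ * y) * v 0 := by
  have hκl : l + κ ≠ 0 :=
    ne_of_apply_ne re (by simpa using (add_pos_of_pos_of_nonneg hl hκ).ne')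
  obtain ⟨A, B, hAB⟩ :=
    exists_eq_add_cexp_of_hasDerivAt isOpen_Ioi isPreconnected_Ioi hκl hv hv' hode
  have hB : B = 0 := eq_zero_of_norm_mul_cexp_le hl (M := M + ‖A‖) fun y hy => by
    calc ‖B * exp (l * y)‖ = ‖v y - A * exp (-κ * y)‖ := by rw [hAB y hy]; ring_nf
      _ ≤ ‖v y‖ + ‖A‖ * ‖exp (-κ * y)‖ := by rw [← norm_mul]; exact norm_sub_le _ _
      _ ≤ M + ‖A‖ * 1 := by
          gcongr
          exacts [hM y hy.le, norm_cexp_neg_mul_ofReal_le_one hκ hy.le]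
      _ = M + ‖A‖ := by ring
  have hEq : EqOn v (fun y : ℝ => A * exp (-κ * y)) (Ici 0) :=
    EqOn.of_subset_closure (s := Ioi 0) (fun y hy => by simp [hAB y hy, hB]) hcont
      (by fun_prop) Ioi_subset_Ici_self (by rw [closure_Ioi])
  intro y hy
  rw [hEq hy, hEq (self_mem_Ici : (0 : ℝ) ∈ Ici 0)]
  simp only [ofReal_zero, mul_zero, exp_zero, mul_one, mul_comm]

lemma deriv_cexp_mul_ofReal_mul (c ψ : ℂ) :
    deriv (fun t : ℝ => exp (c * t) * ψ) = fun t : ℝ => c * (exp (c * t) * ψ) :=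
  funext fun t => by simpa [mul_assoc] using ((hasDerivAt_cexp_mul_ofReal c t).mul_const ψ).deriv

lemma deriv_deriv_cexp_mul_ofReal_mul (c ψ : ℂ) :
    deriv (deriv (fun t : ℝ => exp (c * t) * ψ)) = fun t : ℝ => c ^ 2 * (exp (c * t) * ψ) := by
  rw [deriv_cexp_mul_ofReal_mul]
  funext t
  simpa [mul_assoc, sq] using
    (((hasDerivAt_cexp_mul_ofReal c t).mul_const ψ).const_mul c).deriv

/-- Vieta's relations for `-a₂₂ z² + 2 a₁₂ i η z + (a + η² + μ²)`, whose roots are `-κ`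
and `conj κ`. -/
lemma characteristic_vieta {a a₁₂ a₂₂ η μ s : ℝ} {κ : ℂ} (ha₂₂ : a₂₂ ≠ 0)
    (hs : s ^ 2 = a₂₂ * (a + μ ^ 2) + (a₂₂ - a₁₂ ^ 2) * η ^ 2)
    (hκ : κ = (-I * a₁₂ * η + s) / a₂₂) :
    (a₂₂ : ℂ) * (starRingEnd ℂ κ - κ) = 2 * a₁₂ * I * η ∧
      (a₂₂ : ℂ) * (starRingEnd ℂ κ * κ) = a + η ^ 2 + μ ^ 2 := by
  have h22 : (a₂₂ : ℂ) ≠ 0 := by exact_mod_cast ha₂₂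
  have hs' : (s : ℂ) ^ 2 = a₂₂ * (a + μ ^ 2) + (a₂₂ - a₁₂ ^ 2) * η ^ 2 := by
    exact_mod_cast hs
  subst hκ
  constructor <;> simp only [map_div₀, map_add, map_mul, map_neg, conj_I, conj_ofReal] <;>
    field_simp
  · ring
  · linear_combination hs' - (a₁₂ : ℂ) ^ 2 * η ^ 2 * I_sq

/-- Scalar core of Lemma 5.1: with `κ` the root with positive real part of the
characteristic polynomial, (i) `Re κ > 0`; (ii) `u(y) = e^{−κy}ψ₀` is bounded on
`[0,∞)`, tends to `0` at `∞`, satisfies `u(0) = ψ₀` and solves the ODE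
`−a₂₂u'' + 2a₁₂iηu' + (a + η² + μ²)u = 0` on `(0,∞)`; (iii) it is the unique
bounded twice continuously differentiable solution with value `ψ₀` at `0`. -/
theorem stmt_8 (a α a₁₂ a₂₂ : ℝ) (ha : 0 < a) (hα : 0 < α) (hell : a₂₂ - a₁₂ ^ 2 ≥ α)
    (η μ : ℝ)
    (κ : ℂ)
    (hκ : κ = (-Complex.I * (a₁₂ : ℂ) * (η : ℂ) +
        ((Real.sqrt (a₂₂ * (a + μ ^ 2) + (a₂₂ - a₁₂ ^ 2) * η ^ 2) : ℝ) : ℂ)) / (a₂₂ : ℂ))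
    (ψ₀ : ℂ) :
    (0 < κ.re) ∧
    ((∃ M : ℝ, ∀ y : ℝ, 0 ≤ y → ‖Complex.exp (-κ * (y : ℂ)) * ψ₀‖ ≤ M) ∧
      Filter.Tendsto (fun y : ℝ => Complex.exp (-κ * (y : ℂ)) * ψ₀)
        Filter.atTop (nhds 0) ∧
      Complex.exp (-κ * ((0 : ℝ) : ℂ)) * ψ₀ = ψ₀ ∧
      (∀ y : ℝ, 0 < y →
        -(a₂₂ : ℂ) * deriv (deriv (fun t : ℝ => Complex.exp (-κ * (t : ℂ)) * ψ₀)) y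
          + 2 * (a₁₂ : ℂ) * Complex.I * (η : ℂ) *
              deriv (fun t : ℝ => Complex.exp (-κ * (t : ℂ)) * ψ₀) y
          + ((a : ℂ) + (η : ℂ) ^ 2 + (μ : ℂ) ^ 2) * (Complex.exp (-κ * (y : ℂ)) * ψ₀) = 0)) ∧
    (∀ v : ℝ → ℂ,
      ContinuousOn v (Set.Ici 0) →
      (∀ y : ℝ, 0 < y → ContDiffAt ℝ 2 v y) →
      (∃ M : ℝ, ∀ y : ℝ, 0 ≤ y → ‖v y‖ ≤ M) →
      v 0 = ψ₀ →
      (∀ y : ℝ, 0 < y →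
        -(a₂₂ : ℂ) * deriv (deriv v) y
          + 2 * (a₁₂ : ℂ) * Complex.I * (η : ℂ) * deriv v y
          + ((a : ℂ) + (η : ℂ) ^ 2 + (μ : ℂ) ^ 2) * v y = 0) →
      ∀ y : ℝ, 0 ≤ y → v y = Complex.exp (-κ * (y : ℂ)) * ψ₀) := by
  have ha₂₂ : 0 < a₂₂ := by nlinarith [sq_nonneg a₁₂]
  have hdisc : 0 < a₂₂ * (a + μ ^ 2) + (a₂₂ - a₁₂ ^ 2) * η ^ 2 := by
    have : 0 ≤ (a₂₂ - a₁₂ ^ 2) * η ^ 2 := mul_nonneg (by linarith) (sq_nonneg η)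
    have : 0 < a₂₂ * (a + μ ^ 2) := by positivity
    linarith
  have hκre : 0 < κ.re := by
    rw [hκ, div_ofReal_re]; simpa using div_pos (Real.sqrt_pos.2 hdisc) ha₂₂
  obtain ⟨hsub, hmul⟩ := characteristic_vieta ha₂₂.ne' (Real.sq_sqrt hdisc.le) hκ
  refine ⟨hκre, ⟨⟨‖ψ₀‖, fun y hy => ?_⟩, ?_, by simp, fun y _ => ?_⟩, ?_⟩
  · simpa [norm_mul] using
      mul_le_of_le_one_left (norm_nonneg ψ₀) (norm_cexp_neg_mul_ofReal_le_one hκre.le hy)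
  · simpa using (tendsto_cexp_neg_mul_ofReal_atTop hκre).mul_const ψ₀
  · rw [deriv_deriv_cexp_mul_ofReal_mul, deriv_cexp_mul_ofReal_mul]
    linear_combination (exp (-κ * y) * ψ₀) * (hsub * κ - hmul)
  · intro v hvcont hvC2 ⟨M, hM⟩ hv0 hode y hy
    have hv : ∀ y ∈ Ioi (0 : ℝ), HasDerivAt v (deriv v y) y := fun y hy =>
      ((hvC2 y hy).differentiableAt (by norm_num)).hasDerivAt
    have hv' : ∀ y ∈ Ioi (0 : ℝ), HasDerivAt (deriv v) (deriv (deriv v) y) y := fun y hy =>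
      (((hvC2 y hy).derivWithin (m := 1) (by norm_num)).differentiableAt one_ne_zero).hasDerivAt
    rw [← hv0]
    refine eq_cexp_neg_mul_of_bounded (l := starRingEnd ℂ κ) hκre.le (by simpa using hκre)
      hvcont hv hv' (fun y hy => mul_left_cancel₀ (ofReal_ne_zero.2 ha₂₂.ne') ?_) hM y hy
    linear_combination -hode y hy - deriv v y * hsub - v y * hmul
end
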